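/- arXiv:math/0512454 — 7 statements merged into one kernel-verified Lean document; each statement's English description precedes it below -/
import Mathlib

section
/- Let p and q be projections (self-adjoint idempotents) in a C*-algebra. Then ‖p − q‖³ ≤ max(‖p − pqp‖, ‖q − qpq‖). In particular, if ‖p − pqp‖ < 1 and ‖q − qpq‖ < 1, then ‖p − q‖ < 1. -/
/-!
Since `p - pqp = (p - qp)⋆(p - qp)` and `q - qpq = (q - pq)⋆(q - pq)` are positive and
`(p - q)³ = (p - pqp) - (q - qpq)`, the self-adjoint element `(p - q)³` lies between
`-‖q - qpq‖` and `‖p - pqp‖`, so its norm, which is `‖p - q‖³`, is at most the larger of the two.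
-/

namespace IsSelfAdjoint

variable {A : Type*} [CStarAlgebra A]

lemma norm_pow_three {a : A} (ha : IsSelfAdjoint a) : ‖a ^ 3‖ = ‖a‖ ^ 3 := by
  refine le_antisymm (norm_pow_le' a (by norm_num)) ?_
  rcases (norm_nonneg a).eq_or_lt with h | h
  · simp [← h]
  have h4 : ‖a‖ ^ 4 ≤ ‖a‖ * ‖a ^ 3‖ :=
    calc ‖a‖ ^ 4 = ‖a ^ 4‖ := by simpa using (ha.norm_pow_two_pow 2).symm
      _ = ‖a * a ^ 3‖ := by rw [← pow_succ']
      _ ≤ ‖a‖ * ‖a ^ 3‖ := norm_mul_le _ _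
  nlinarith

variable [PartialOrder A] [StarOrderedRing A]

lemma norm_le_of_neg_le_of_le {a : A} (ha : IsSelfAdjoint a) {r : ℝ} (hr : 0 ≤ r)
    (hlower : -algebraMap ℝ A r ≤ a) (hupper : a ≤ algebraMap ℝ A r) : ‖a‖ ≤ r := by
  obtain _ | _ := subsingleton_or_nontrivial A
  · simpa [Subsingleton.elim a 0] using hr
  have hspec_le : ∀ s ∈ spectrum ℝ a, s ≤ r := (le_algebraMap_iff_spectrum_le ha).mp hupper
  have hle_spec : ∀ s ∈ spectrum ℝ a, -r ≤ s :=
    (algebraMap_le_iff_le_spectrum ha).mp (by simpa using hlower)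
  rcases CStarAlgebra.norm_or_neg_norm_mem_spectrum ha with h | h
  · exact hspec_le _ h
  · linarith [hle_spec _ h]

end IsSelfAdjoint

lemma CStarAlgebra.norm_sub_le_max_of_nonneg {A : Type*} [CStarAlgebra A] [PartialOrder A]
    [StarOrderedRing A] {a b : A} (ha : 0 ≤ a) (hb : 0 ≤ b) : ‖a - b‖ ≤ max ‖a‖ ‖b‖ := by
  have hmax : 0 ≤ max ‖a‖ ‖b‖ := le_max_of_le_left (norm_nonneg a)
  refine (IsSelfAdjoint.of_nonneg ha).sub (.of_nonneg hb) |>.norm_le_of_neg_le_of_le hmax ?_ ?_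
  · calc -algebraMap ℝ A (max ‖a‖ ‖b‖) ≤ -algebraMap ℝ A ‖b‖ :=
          neg_le_neg (algebraMap_mono A (le_max_right _ _))
      _ ≤ -b := neg_le_neg (IsSelfAdjoint.of_nonneg hb).le_algebraMap_norm_self
      _ ≤ a - b := by simpa using ha
  · calc a - b ≤ a := by simpa using hb
      _ ≤ algebraMap ℝ A ‖a‖ := (IsSelfAdjoint.of_nonneg ha).le_algebraMap_norm_self
      _ ≤ algebraMap ℝ A (max ‖a‖ ‖b‖) := algebraMap_mono A (le_max_left _ _)

lemma IsIdempotentElem.sub_pow_three {R : Type*} [Ring R] {p q : R} (hp : IsIdempotentElem p)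
    (hq : IsIdempotentElem q) : (p - q) ^ 3 = (p - p * q * p) - (q - q * p * q) := by
  simp only [pow_succ, pow_zero, one_mul, sub_mul, mul_sub, mul_assoc, hp.eq, hq.eq]
  abel

namespace IsStarProjection

variable {R : Type*} [Ring R] [StarRing R] {p q : R}

lemma sub_mul_mul_eq_star_mul_self (hp : IsStarProjection p) (hq : IsStarProjection q) :
    p - p * q * p = star (p - q * p) * (p - q * p) := by
  simp only [star_sub, star_mul, hp.isSelfAdjoint.star_eq, hq.isSelfAdjoint.star_eq, sub_mul,
    mul_sub, mul_assoc, hp.isIdempotentElem.eq, ← mul_assoc q q, hq.isIdempotentElem.eq]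
  abel

lemma sub_mul_mul_nonneg [PartialOrder R] [StarOrderedRing R] (hp : IsStarProjection p)
    (hq : IsStarProjection q) : 0 ≤ p - p * q * p :=
  hp.sub_mul_mul_eq_star_mul_self hq ▸ star_mul_self_nonneg _

end IsStarProjection

/-- Let `p` and `q` be projections in a C*-algebra. Then
`‖p - q‖³ ≤ max (‖p - pqp‖) (‖q - qpq‖)`; in particular, if `‖p - pqp‖ < 1` and
`‖q - qpq‖ < 1`, then `‖p - q‖ < 1`. -/
theorem norm_projection_sub_cube_le {A : Type*} [CStarAlgebra A] (p q : A)
    (hp : p * p = p) (hps : star p = p) (hq : q * q = q) (hqs : star q = q) :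
    ‖p - q‖ ^ 3 ≤ max ‖p - p * q * p‖ ‖q - q * p * q‖ ∧
      (‖p - p * q * p‖ < 1 → ‖q - q * p * q‖ < 1 → ‖p - q‖ < 1) := by
  let : PartialOrder A := CStarAlgebra.spectralOrder A
  let : StarOrderedRing A := CStarAlgebra.spectralOrderedRing A
  have hP : IsStarProjection p := ⟨hp, hps⟩
  have hQ : IsStarProjection q := ⟨hq, hqs⟩
  have hcube : ‖p - q‖ ^ 3 ≤ max ‖p - p * q * p‖ ‖q - q * p * q‖ := by
    rw [← (hP.isSelfAdjoint.sub hQ.isSelfAdjoint).norm_pow_three,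
      hP.isIdempotentElem.sub_pow_three hQ.isIdempotentElem]
    exact CStarAlgebra.norm_sub_le_max_of_nonneg (hP.sub_mul_mul_nonneg hQ)
      (hQ.sub_mul_mul_nonneg hP)
  refine ⟨hcube, fun hpqp hqpq => ?_⟩
  rw [← pow_lt_one_iff_of_nonneg (norm_nonneg _) three_ne_zero]
  exact hcube.trans_lt (max_lt hpqp hqpq)
end

section
/- Let A and B be unital C*-algebras, φ : A → B a unital *-homomorphism, and a ∈ A self-adjoint such that φ(a) is invertible in B. Let ε > 0 be such that the spectrum of φ(a) is disjoint from the open interval (−ε, ε). Let f₁ : ℝ → ℝ be the continuous piecewise-linear function equal to 1 on [0, ∞), equal to 0 on (−∞, −ε], and linear on [−ε, 0]; and let f₂ : ℝ → ℝ be the continuous piecewise-linear function equal to 1 on [ε, ∞), equal to 0 on (−∞, 0], and linear on [0, ε]. Let χ be the indicator function of [0, ∞), which is continuous on the spectrum of φ(a). Then φ(f₁(a)) = χ(φ(a)) = φ(f₂(a)), where f₁(a), f₂(a), χ(φ(a)) are formed by continuous functional calculus; in particular this common element is a projection (a self-adjoint idempotent) in B. -/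
open scoped CStarAlgebra

/-- Let `φ : A → B` be a unital *-homomorphism of unital C*-algebras, `a ∈ A`
self-adjoint with `φ a` invertible, and `ε > 0` with the spectrum of `φ a` disjoint from
`(-ε, ε)`.  With `f₁, f₂` the indicated piecewise linear approximations to the indicator
function `χ` of `[0, ∞)`, one has `φ (f₁ a) = χ (φ a) = φ (f₂ a)` (continuous functional
calculus), and this common element is a projection in `B`. -/
theorem apply_cfc_indicator_eq {A B : Type*} [CStarAlgebra A] [CStarAlgebra B]
    (φ : A →⋆ₐ[ℂ] B) (a : A) (ha : IsSelfAdjoint a) (hinv : IsUnit (φ a))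
    (ε : ℝ) (hε : 0 < ε) (hspec : spectrum ℝ (φ a) ∩ Set.Ioo (-ε) ε = ∅)
    (f₁ f₂ χ : ℝ → ℝ)
    (hf₁ : f₁ = fun x => if 0 ≤ x then 1 else if x ≤ -ε then 0 else (x + ε) / ε)
    (hf₂ : f₂ = fun x => if x ≤ 0 then 0 else if ε ≤ x then 1 else x / ε)
    (hχ : χ = fun x => if 0 ≤ x then 1 else 0) :
    φ (cfc f₁ a) = cfc χ (φ a) ∧ cfc χ (φ a) = φ (cfc f₂ a) ∧
      IsIdempotentElem (cfc χ (φ a)) ∧ IsSelfAdjoint (cfc χ (φ a)) := by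
  have hφa : IsSelfAdjoint (φ a) := ha.map φ
  have hφcont : Continuous φ := map_continuous φ
  -- rewrite f₁, f₂ as min/max combinations to get continuity
  have hf₁' : f₁ = fun x => min 1 (max 0 ((x + ε) / ε)) := by
    subst hf₁; funext x
    rcases le_or_gt 0 x with h | h
    · simp only [if_pos h]
      rw [min_eq_left]
      exact le_max_of_le_right (by rw [le_div_iff₀ hε]; linarith)
    · rw [if_neg (not_le.mpr h)]
      rcases le_or_gt x (-ε) with h2 | h2
      · rw [if_pos h2, max_eq_left (by rw [div_nonpos_iff]; right; constructor <;> linarith),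
          min_eq_right zero_le_one]
      · rw [if_neg (not_le.mpr h2), max_eq_right (by apply div_nonneg <;> linarith),
          min_eq_right (by rw [div_le_one hε]; linarith)]
  have hf₂' : f₂ = fun x => min 1 (max 0 (x / ε)) := by
    subst hf₂; funext x
    rcases le_or_gt x 0 with h | h
    · rw [if_pos h, max_eq_left (by rw [div_nonpos_iff]; right; exact ⟨h, hε.le⟩),
        min_eq_right zero_le_one]
    · rw [if_neg (not_le.mpr h)]
      rcases le_or_gt ε x with h2 | h2
      · rw [if_pos h2, min_eq_left]
        exact le_max_of_le_right (by rw [le_div_iff₀ hε]; linarith)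
      · rw [if_neg (not_le.mpr h2), max_eq_right (by apply div_nonneg <;> linarith),
          min_eq_right (by rw [div_le_one hε]; linarith)]
  have hc₁ : Continuous f₁ := by rw [hf₁']; fun_prop
  have hc₂ : Continuous f₂ := by rw [hf₂']; fun_prop
  have hmem : ∀ x ∈ spectrum ℝ (φ a), x ≤ -ε ∨ ε ≤ x := by
    intro x hx
    by_contra h
    push_neg at h
    have hxmem : x ∈ Set.Ioo (-ε) ε := ⟨by linarith [h.1], by linarith [h.2]⟩
    exact Set.eq_empty_iff_forall_notMem.mp hspec x ⟨hx, hxmem⟩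
  have heq₁ : Set.EqOn f₁ χ (spectrum ℝ (φ a)) := by
    intro x hx
    have h := hmem x hx
    simp only [hf₁, hχ]
    rcases h with h | h <;> split_ifs <;> first | rfl | linarith
  have heq₂ : Set.EqOn f₂ χ (spectrum ℝ (φ a)) := by
    intro x hx
    have h := hmem x hx
    simp only [hf₂, hχ]
    rcases h with h | h <;> split_ifs <;> first | rfl | linarith
  have hχc : ContinuousOn χ (spectrum ℝ (φ a)) :=
    (hc₁.continuousOn).congr heq₁.symm
  have h1 : φ (cfc f₁ a) = cfc χ (φ a) := by
    rw [φ.map_cfc f₁ a hc₁.continuousOn, cfc_congr heq₁]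
  have h2 : cfc χ (φ a) = φ (cfc f₂ a) := by
    rw [φ.map_cfc f₂ a hc₂.continuousOn, cfc_congr heq₂]
  have hidem : IsIdempotentElem (cfc χ (φ a)) := by
    unfold IsIdempotentElem
    rw [← cfc_mul χ χ (φ a) hχc hχc]
    apply cfc_congr
    intro x hx
    simp only [hχ]
    by_cases h : 0 ≤ x <;> simp [h]
  exact ⟨h1, h2, hidem, cfc_predicate χ (φ a)⟩
end

section
/- Let P and Q be orthogonal projections on a complex Hilbert space H. Then the kernel of the operator P + Q − 1 is the (orthogonal) direct sum of ker(Q) ∩ range(P) and ker(P) ∩ range(Q); that is, as submodules of H, ker(P + Q − 1) = (ker(Q) ⊓ range(P)) ⊔ (ker(P) ⊓ range(Q)). -/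
/-!
If `P x + Q x = x`, applying the idempotent `P` cancels `P x` and leaves `P (Q x) = 0`;
symmetrically `Q (P x) = 0`. Hence `x = P x + Q x` is a sum of a vector of `ker Q ⊓ range P` and
one of `ker P ⊓ range Q`. Conversely, `P + Q - 1` vanishes on `range P ⊓ ker Q` since `P` fixes
its range.
-/

namespace LinearMap

variable {R M : Type*} [Semiring R] [AddCommGroup M] [Module R M] {p q : M →ₗ[R] M}

theorem mem_ker_add_sub_one {x : M} : x ∈ ker (p + q - 1) ↔ p x + q x = x := by
  simp [sub_eq_zero]

namespace IsIdempotentElem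

theorem apply_apply_eq_zero_of_add_apply_eq_self (hp : IsIdempotentElem p) {x : M}
    (hx : p x + q x = x) : p (q x) = 0 := by
  have h := congrArg p hx
  rwa [map_add, (mem_range_iff hp).mp (mem_range_self p x), add_eq_left] at h

theorem ker_inf_range_le_ker_add_sub_one (hp : IsIdempotentElem p) :
    ker q ⊓ range p ≤ ker (p + q - 1) := by
  rintro x ⟨hqx, hpx⟩
  rw [mem_ker_add_sub_one, (mem_range_iff hp).mp hpx, mem_ker.mp hqx, add_zero]

theorem ker_add_sub_one_eq_sup (hp : IsIdempotentElem p) (hq : IsIdempotentElem q) :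
    ker (p + q - 1) = (ker q ⊓ range p) ⊔ (ker p ⊓ range q) := by
  refine le_antisymm (fun x hx ↦ ?_) (sup_le ?_ ?_)
  · have hx : p x + q x = x := mem_ker_add_sub_one.mp hx
    have hqp : q (p x) = 0 :=
      apply_apply_eq_zero_of_add_apply_eq_self hq (by rwa [add_comm])
    have hpq : p (q x) = 0 := apply_apply_eq_zero_of_add_apply_eq_self hp hx
    rw [← hx]
    exact Submodule.add_mem_sup ⟨hqp, mem_range_self p x⟩ ⟨hpq, mem_range_self q x⟩
  · exact ker_inf_range_le_ker_add_sub_one hp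
  · rw [add_comm p]
    exact ker_inf_range_le_ker_add_sub_one hq

end IsIdempotentElem

end LinearMap

/-- Let `P` and `Q` be orthogonal projections on a complex Hilbert space `H`.  Then
`ker (P + Q - 1) = (ker Q ⊓ range P) ⊔ (ker P ⊓ range Q)`. -/
theorem ker_add_sub_one_eq_sup {H : Type*} [NormedAddCommGroup H]
    [InnerProductSpace ℂ H] (P Q : H →L[ℂ] H)
    (hP : IsIdempotentElem P)
    (hQ : IsIdempotentElem Q) :
    LinearMap.ker ((P + Q - 1 : H →L[ℂ] H) : H →ₗ[ℂ] H) =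
      (LinearMap.ker (Q : H →ₗ[ℂ] H) ⊓ LinearMap.range (P : H →ₗ[ℂ] H)) ⊔
        (LinearMap.ker (P : H →ₗ[ℂ] H) ⊓ LinearMap.range (Q : H →ₗ[ℂ] H)) :=
  LinearMap.IsIdempotentElem.ker_add_sub_one_eq_sup
    (ContinuousLinearMap.IsIdempotentElem.toLinearMap hP)
    (ContinuousLinearMap.IsIdempotentElem.toLinearMap hQ)
end

section
/- Let R be a unital associative algebra over ℝ, and let B₀, B₁ ∈ R satisfy B₀² = 1 and B₁² = 1. For t ∈ ℝ set B(t) = (1 − t)B₀ + tB₁. Then for every t ∈ ℝ: (i) (B₀ + B₁)·B(t) = B(1 − t)·(B₀ + B₁); and (ii) (B₀ + B₁)² commutes with B(t), i.e., (B₀ + B₁)²·B(t) = B(t)·(B₀ + B₁)². -/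
theorem semiconjBy_add_smul_of_mul_self_eq_one {S R : Type*} [CommRing S] [Ring R]
    [Algebra S R] {a b : R} (ha : a * a = 1) (hb : b * b = 1) (t : S) :
    SemiconjBy (a + b) ((1 - t) • a + t • b) (t • a + (1 - t) • b) := by
  unfold SemiconjBy
  simp only [mul_add, add_mul, mul_smul_comm, smul_mul_assoc, ha, hb]
  module

/-- Let `B₀, B₁` be involutions in a unital associative `ℝ`-algebra and
`B t = (1 - t) • B₀ + t • B₁`.  Then `(B₀ + B₁) * B t = B (1 - t) * (B₀ + B₁)` and
`(B₀ + B₁)²` commutes with `B t`. -/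
theorem involution_path_intertwining {R : Type*} [Ring R] [Algebra ℝ R]
    (B₀ B₁ : R) (h₀ : B₀ * B₀ = 1) (h₁ : B₁ * B₁ = 1)
    (B : ℝ → R) (hB : ∀ t : ℝ, B t = (1 - t) • B₀ + t • B₁) (t : ℝ) :
    (B₀ + B₁) * B t = B (1 - t) * (B₀ + B₁) ∧
      (B₀ + B₁) ^ 2 * B t = B t * (B₀ + B₁) ^ 2 := by
  have forward : SemiconjBy (B₀ + B₁) (B t) (B (1 - t)) := by
    simpa only [hB, sub_sub_cancel] using semiconjBy_add_smul_of_mul_self_eq_one h₀ h₁ t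
  have backward : SemiconjBy (B₀ + B₁) (B (1 - t)) (B t) := by
    simpa only [hB, sub_sub_cancel] using semiconjBy_add_smul_of_mul_self_eq_one h₀ h₁ (1 - t)
  exact ⟨forward, by rw [sq]; exact backward.mul_left forward⟩
end

section
/- Let B₀ and B₁ be bounded self-adjoint operators on a complex Hilbert space H with B₀² = 1 and B₁² = 1, and for t ∈ ℝ set B(t) = (1 − t)B₀ + tB₁. Let |B₀ + B₁| denote the square root of the positive operator (B₀ + B₁)² (given by continuous functional calculus), and suppose U is a bounded operator on H satisfying U·|B₀ + B₁| = B₀ + B₁ and Uv = 0 for every v ∈ ker(B₀ + B₁). Then U·B(t) = B(1 − t)·U for every t ∈ ℝ; in particular U·B₀ = B₁·U. -/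
/-! Write `S = B₀ + B₁`. Any `X, Y` with `S X = Y S` and `S Y = X S` are intertwined by `U` too:
`X` commutes with `S²`, hence with `|S| = √(S²)`, so `(U X - Y U) |S| = S X - Y S = 0`. Thus
`U X - Y U` vanishes on the closure of the range of `|S|`, which is `(ker |S|)ᗮ = (ker S)ᗮ`, and
on `ker S`, which `X` preserves. For `X = B t`, `Y = B (1 - t)` both relations hold because
`B₀² = B₁²`. -/

theorem add_mul_smul_add_smul_of_mul_self_eq {k R : Type*} [CommRing k] [Ring R] [Algebra k R]
    {a b : R} (h : a * a = b * b) (t : k) :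
    (a + b) * ((1 - t) • a + t • b) = (t • a + (1 - t) • b) * (a + b) := by
  simp only [mul_add, add_mul, smul_mul_assoc, mul_smul_comm, h]
  module

namespace ContinuousLinearMap

variable {𝕜 E F : Type*} [RCLike 𝕜]
  [NormedAddCommGroup E] [InnerProductSpace 𝕜 E] [CompleteSpace E]
  [NormedAddCommGroup F] [InnerProductSpace 𝕜 F]

theorem ker_eq_ker_of_adjoint_comp_self_eq {G : Type*} [CompleteSpace F] [NormedAddCommGroup G]
    [InnerProductSpace 𝕜 G] [CompleteSpace G] {A : E →L[𝕜] F} {S : E →L[𝕜] G}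
    (h : (adjoint A).comp A = (adjoint S).comp S) : A.ker = S.ker := by
  rw [← ker_adjoint_comp_self, h, ker_adjoint_comp_self]

theorem eq_zero_of_comp_eq_zero_of_ker_le {A : E →L[𝕜] E} (hA : IsSelfAdjoint A)
    {T : E →L[𝕜] F} (hTA : T.comp A = 0) (hker : A.ker ≤ T.ker) : T = 0 := by
  have hrange : A.range.topologicalClosure ≤ T.ker :=
    Submodule.topologicalClosure_minimal _
      (by rintro _ ⟨v, rfl⟩; simpa using congr($hTA v)) T.isClosed_ker
  have hperp : A.kerᗮ ≤ T.ker := by rwa [orthogonal_ker, hA.adjoint_eq]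
  have : CompleteSpace A.ker := A.isClosed_ker.completeSpace_coe
  have htop : (⊤ : Submodule 𝕜 E) ≤ T.ker := by
    rw [← Submodule.sup_orthogonal_of_hasOrthogonalProjection (K := A.ker)]
    exact sup_le hker hperp
  ext v
  exact htop Submodule.mem_top

end ContinuousLinearMap

open ContinuousLinearMap in
theorem IsSelfAdjoint.polar_mul_eq_mul_polar {H : Type*} [NormedAddCommGroup H]
    [InnerProductSpace ℂ H] [CompleteSpace H] {S U X Y : H →L[ℂ] H} (hS : IsSelfAdjoint S)
    (hU : U * CFC.sqrt (S ^ 2) = S) (hUker : S.ker ≤ U.ker)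
    (hXY : S * X = Y * S) (hYX : S * Y = X * S) : U * X = Y * U := by
  have hSsq : 0 ≤ S ^ 2 := by simpa [sq, hS.star_eq] using star_mul_self_nonneg S
  have hXA : Commute X (CFC.sqrt (S ^ 2)) := by
    have hS2X : Commute (S ^ 2) X := by
      rw [Commute, SemiconjBy, sq, mul_assoc, hXY, ← mul_assoc, hYX, mul_assoc]
    rw [CFC.sqrt_eq_cfc]
    exact (hS2X.cfc_nnreal _).symm
  set A := CFC.sqrt (S ^ 2)
  have hA : IsSelfAdjoint A := .of_nonneg (CFC.sqrt_nonneg _)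
  have hkerA : A.ker = S.ker := ker_eq_ker_of_adjoint_comp_self_eq <| by
    rw [← star_eq_adjoint, ← star_eq_adjoint, hA.star_eq, hS.star_eq]
    exact (CFC.sqrt_mul_sqrt_self _ hSsq).trans (sq S)
  have hXker : ∀ v ∈ S.ker, X v ∈ S.ker := fun v (hv : S v = 0) => by
    simpa [hv] using congr($hXY v)
  rw [← sub_eq_zero]
  refine eq_zero_of_comp_eq_zero_of_ker_le hA ?_ (hkerA ▸ fun v hv => ?_)
  · change (U * X - Y * U) * A = 0
    rw [sub_mul, mul_assoc, hXA.eq, ← mul_assoc, hU, hXY, mul_assoc, hU, sub_self]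
  · have hUXv : U (X v) = 0 := hUker (hXker v hv)
    have hUv : U v = 0 := hUker hv
    show (U * X - Y * U) v = 0
    simp [hUXv, hUv]

/-- Let `B₀, B₁` be self-adjoint involutions on a complex Hilbert space,
`B t = (1 - t) B₀ + t B₁`, and `U` a bounded operator with `U |B₀ + B₁| = B₀ + B₁`
(where `|B₀ + B₁| = √((B₀ + B₁)²)` via continuous functional calculus) and `U` vanishing
on `ker (B₀ + B₁)`.  Then `U B(t) = B(1 - t) U` for all `t`; in particular
`U B₀ = B₁ U`. -/
theorem partial_isometry_intertwines_path {H : Type*} [NormedAddCommGroup H]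
    [InnerProductSpace ℂ H] [CompleteSpace H] (B₀ B₁ : H →L[ℂ] H)
    (h₀s : IsSelfAdjoint B₀) (h₁s : IsSelfAdjoint B₁)
    (h₀ : B₀ * B₀ = 1) (h₁ : B₁ * B₁ = 1)
    (B : ℝ → (H →L[ℂ] H)) (hB : ∀ t : ℝ, B t = (1 - t) • B₀ + t • B₁)
    (U : H →L[ℂ] H) (hU : U * CFC.sqrt ((B₀ + B₁) ^ 2) = B₀ + B₁)
    (hUker : ∀ v ∈ LinearMap.ker ((B₀ + B₁ : H →L[ℂ] H) : H →ₗ[ℂ] H), U v = 0) :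
    (∀ t : ℝ, U * B t = B (1 - t) * U) ∧ U * B₀ = B₁ * U := by
  have hpath : ∀ t, (B₀ + B₁) * B t = B (1 - t) * (B₀ + B₁) := fun t => by
    rw [hB, hB, sub_sub_cancel]
    exact add_mul_smul_add_smul_of_mul_self_eq (h₀.trans h₁.symm) t
  have hintertwine : ∀ t, U * B t = B (1 - t) * U := fun t =>
    (h₀s.add h₁s).polar_mul_eq_mul_polar hU hUker (hpath t) (by simpa using hpath (1 - t))
  refine ⟨hintertwine, ?_⟩
  simpa [hB] using hintertwine 0
end

section
/- Let P and Q be orthogonal projections on a complex Hilbert space H such that ker(Q) ∩ range(P) = {0} and ker(P) ∩ range(Q) = {0}. Then 1 is not an eigenvalue of (Q − P)²; that is, ker(1 − (Q − P)²) = {0}. -/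
/-!
If `(Q - P)² x = x`, then `P (Q - P)² = P - PQP` gives `PQP x = 0`, and
`‖QP x‖² = ⟪P x, QP x⟫ = ⟪x, PQP x⟫ = 0`, so `P x ∈ ker Q ∩ range P = {0}`.
By symmetry `Q x = 0` as well, whence `x = (Q - P)² x = 0`.
-/

open ContinuousLinearMap

theorem IsIdempotentElem.mul_sub_sq {R : Type*} [Ring R] {p q : R}
    (hp : IsIdempotentElem p) (hq : IsIdempotentElem q) :
    p * (q - p) ^ 2 = p - p * q * p := by
  simp only [sq, mul_sub, sub_mul, ← mul_assoc, hp.eq, hq.eq]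
  abel

section InnerProductSpace

variable {𝕜 E : Type*} [RCLike 𝕜] [NormedAddCommGroup E] [InnerProductSpace 𝕜 E]
  [CompleteSpace E]

theorem IsStarProjection.norm_apply_sq {Q : E →L[𝕜] E} (hQ : IsStarProjection Q) (y : E) :
    ‖Q y‖ ^ 2 = RCLike.re (inner 𝕜 y (Q y)) := by
  have hQQ : adjoint Q ∘L Q = Q := by
    rw [← star_eq_adjoint, hQ.isSelfAdjoint.star_eq]
    exact hQ.isIdempotentElem.eq
  rw [apply_norm_sq_eq_inner_adjoint_right, hQQ]

theorem IsStarProjection.mul_apply_eq_zero_of_mul_mul_apply_eq_zero {P Q : E →L[𝕜] E}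
    (hP : IsSelfAdjoint P) (hQ : IsStarProjection Q) {x : E} (h : (P * Q * P) x = 0) :
    (Q * P) x = 0 := by
  have hinner : inner 𝕜 (P x) (Q (P x)) = 0 := by
    have hPQP : P (Q (P x)) = 0 := h
    calc inner 𝕜 (P x) (Q (P x)) = inner 𝕜 x (P (Q (P x))) := hP.isSymmetric _ _
      _ = 0 := by rw [hPQP, inner_zero_right]
  have hnorm : ‖(Q * P) x‖ ^ 2 = 0 := by
    simp [hQ.norm_apply_sq, hinner]
  simpa using hnorm

theorem IsStarProjection.apply_eq_zero_of_sub_sq_apply_eq_self {P Q : E →L[𝕜] E}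
    (hP : IsStarProjection P) (hQ : IsStarProjection Q)
    (h : LinearMap.ker (Q : E →ₗ[𝕜] E) ⊓ LinearMap.range (P : E →ₗ[𝕜] E) = ⊥)
    {x : E} (hx : ((Q - P) ^ 2) x = x) : P x = 0 := by
  have hPQP : (P * Q * P) x = 0 := by
    have hPx := congrArg P hx
    rw [← mul_apply_eq_comp, hP.isIdempotentElem.mul_sub_sq hQ.isIdempotentElem,
      sub_apply] at hPx
    exact sub_eq_self.mp hPx
  have hQP : Q (P x) = 0 := hQ.mul_apply_eq_zero_of_mul_mul_apply_eq_zero hP.isSelfAdjoint hPQP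
  have hmem : P x ∈ LinearMap.ker (Q : E →ₗ[𝕜] E) ⊓ LinearMap.range (P : E →ₗ[𝕜] E) :=
    ⟨hQP, x, rfl⟩
  simpa [h] using hmem

end InnerProductSpace

/-- Let `P, Q` be orthogonal projections on a complex Hilbert space with
`ker Q ∩ range P = {0}` and `ker P ∩ range Q = {0}`.  Then `1` is not an eigenvalue of
`(Q - P)²`, i.e. `ker (1 - (Q - P)²) = {0}`. -/
theorem one_not_eigenvalue_of_trivial_intersections {H : Type*} [NormedAddCommGroup H]
    [InnerProductSpace ℂ H] [CompleteSpace H] (P Q : H →L[ℂ] H)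
    (hP : IsIdempotentElem P) (hPs : IsSelfAdjoint P)
    (hQ : IsIdempotentElem Q) (hQs : IsSelfAdjoint Q)
    (h1 : LinearMap.ker (Q : H →ₗ[ℂ] H) ⊓ LinearMap.range (P : H →ₗ[ℂ] H) = ⊥)
    (h2 : LinearMap.ker (P : H →ₗ[ℂ] H) ⊓ LinearMap.range (Q : H →ₗ[ℂ] H) = ⊥) :
    LinearMap.ker ((1 - (Q - P) ^ 2 : H →L[ℂ] H) : H →ₗ[ℂ] H) = ⊥ := by
  have hPproj : IsStarProjection P := ⟨hP, hPs⟩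
  have hQproj : IsStarProjection Q := ⟨hQ, hQs⟩
  rw [Submodule.eq_bot_iff]
  intro x hker
  have hx : ((Q - P) ^ 2) x = x := (sub_eq_zero.mp hker).symm
  have hPx : P x = 0 := hPproj.apply_eq_zero_of_sub_sq_apply_eq_self hQproj h1 hx
  have hQx : Q x = 0 :=
    hQproj.apply_eq_zero_of_sub_sq_apply_eq_self hPproj h2 (by rwa [← neg_sub, neg_sq])
  calc x = ((Q - P) ^ 2) x := hx.symm
    _ = (Q - P) (Q x - P x) := rfl
    _ = 0 := by rw [hPx, hQx, sub_zero, map_zero]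
end

section
/- Let P and Q be orthogonal projections on a complex Hilbert space H, let δ ∈ (0, 1], and suppose ‖Q − P‖ ≤ 1 − δ. Let B₀ = 2Q − 1, B₁ = 2P − 1, and for t ∈ [0,1] set B(t) = (1 − t)B₀ + tB₁. Then for every t ∈ [0,1], the spectrum of B(t) is contained in [−1, −δ] ∪ [δ, 1]; in particular, each B(t) is invertible. -/
/-!
Each `B t` is self-adjoint of norm at most `1`, so its spectrum is real and lies in `[-1, 1]`.
The endpoints `B₀`, `B₁` are self-adjoint involutions with `‖B₁ - B₀‖ = 2‖P - Q‖ ≤ 2(1 - δ)`,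
so `B t` lies within `1 - δ` of one of them, say `a`. For real `|λ| < δ` the element `λ - a` is
invertible with inverse `(λ + a) / (λ² - 1)`, of norm at most `1 / (1 - |λ|) < 1 / (1 - δ)`;
hence `λ - B t`, a perturbation of `λ - a` by less than `‖(λ - a)⁻¹‖⁻¹`, is invertible too.
-/

section Involution

variable {𝕜 A : Type*} [NormedField 𝕜] [NormedRing A] [NormedAlgebra 𝕜 A] [NormOneClass A]
  {a : A} {c : 𝕜}

theorem exists_unit_algebraMap_sub_of_mul_self_eq_one (ha : a * a = 1) (ha1 : ‖a‖ ≤ 1)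
    (hc : ‖c‖ < 1) :
    ∃ u : Aˣ, (u : A) = algebraMap 𝕜 A c - a ∧ ‖(↑u⁻¹ : A)‖ ≤ (1 - ‖c‖)⁻¹ := by
  have hgap : (1 - ‖c‖) * (1 + ‖c‖) ≤ ‖c ^ 2 - 1‖ := by
    have := norm_sub_norm_le (1 : 𝕜) (c ^ 2)
    rw [norm_one, norm_pow, norm_sub_rev] at this
    linarith
  have hpos : 0 < (1 - ‖c‖) * (1 + ‖c‖) := by nlinarith [norm_nonneg c]
  have hne : c ^ 2 - 1 ≠ 0 := norm_pos_iff.mp (hpos.trans_le hgap)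
  have hcomm : Commute (algebraMap 𝕜 A c) a := Algebra.commutes c a
  have hsq : algebraMap 𝕜 A c * algebraMap 𝕜 A c - a * a = algebraMap 𝕜 A (c ^ 2 - 1) := by
    rw [ha, map_sub, map_one, map_pow, sq]
  have hinv : (c ^ 2 - 1)⁻¹ • algebraMap 𝕜 A (c ^ 2 - 1) = 1 := by
    rw [Algebra.smul_def, ← map_mul, inv_mul_cancel₀ hne, map_one]
  refine ⟨⟨algebraMap 𝕜 A c - a, (c ^ 2 - 1)⁻¹ • (algebraMap 𝕜 A c + a), ?_, ?_⟩, rfl, ?_⟩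
  · rw [mul_smul_comm, ← hcomm.mul_self_sub_mul_self_eq', hsq, hinv]
  · rw [smul_mul_assoc, ← hcomm.mul_self_sub_mul_self_eq, hsq, hinv]
  · calc ‖(c ^ 2 - 1)⁻¹ • (algebraMap 𝕜 A c + a)‖
        ≤ ‖c ^ 2 - 1‖⁻¹ * (‖c‖ + 1) := by
          rw [norm_smul, norm_inv]
          gcongr
          exact (norm_add_le _ _).trans (by rw [norm_algebraMap']; gcongr)
      _ ≤ ((1 - ‖c‖) * (1 + ‖c‖))⁻¹ * (‖c‖ + 1) := by gcongr
      _ = (1 - ‖c‖)⁻¹ := by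
          have : 1 + ‖c‖ ≠ 0 := by linarith [norm_nonneg c]
          field_simp
          ring

theorem isUnit_algebraMap_sub_add_of_mul_self_eq_one [CompleteSpace A] (ha : a * a = 1)
    (ha1 : ‖a‖ ≤ 1) {e : A} (he : ‖e‖ < 1 - ‖c‖) :
    IsUnit (algebraMap 𝕜 A c - (a + e)) := by
  have : Nontrivial A := NormOneClass.nontrivial
  obtain ⟨u, hu, hu_inv⟩ :=
    exists_unit_algebraMap_sub_of_mul_self_eq_one ha ha1 (c := c) (by linarith [norm_nonneg e])
  have hclose : ‖algebraMap 𝕜 A c - (a + e) - u‖ < ‖(↑u⁻¹ : A)‖⁻¹ := by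
    calc ‖algebraMap 𝕜 A c - (a + e) - u‖ = ‖e‖ := by
          rw [hu, sub_add_eq_sub_sub, sub_sub_cancel_left, norm_neg]
      _ < 1 - ‖c‖ := he
      _ ≤ ‖(↑u⁻¹ : A)‖⁻¹ := by
          simpa using inv_anti₀ (Units.norm_pos u⁻¹) hu_inv
  exact (u.ofNearby _ hclose).isUnit

end Involution

theorem exists_endpoint_norm_sub_le_half {E : Type*} [SeminormedAddCommGroup E]
    [NormedSpace ℝ E] (x y : E) {t : ℝ} (ht : t ∈ Set.Icc (0 : ℝ) 1) :
    ∃ z ∈ ({x, y} : Set E), ‖(1 - t) • x + t • y - z‖ ≤ ‖y - x‖ / 2 := by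
  obtain ⟨ht0, ht1⟩ := ht
  rcases le_total t (1 / 2) with ht2 | ht2
  · refine ⟨x, .inl rfl, ?_⟩
    calc ‖(1 - t) • x + t • y - x‖ = t * ‖y - x‖ := by
          rw [show (1 - t) • x + t • y - x = t • (y - x) by module, norm_smul,
            Real.norm_of_nonneg ht0]
      _ ≤ ‖y - x‖ / 2 := by nlinarith [norm_nonneg (y - x)]
  · refine ⟨y, .inr rfl, ?_⟩
    calc ‖(1 - t) • x + t • y - y‖ = (1 - t) * ‖y - x‖ := by
          rw [show (1 - t) • x + t • y - y = (1 - t) • (x - y) by module, norm_smul,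
            Real.norm_of_nonneg (by linarith), norm_sub_rev]
      _ ≤ ‖y - x‖ / 2 := by nlinarith [norm_nonneg (y - x)]

theorem IsIdempotentElem.two_nsmul_sub_one_mul_self {R : Type*} [Ring R] {p : R}
    (hp : IsIdempotentElem p) : (2 • p - 1) * (2 • p - 1) = 1 := by
  have : (2 • p - 1) * (2 • p - 1) = 4 • (p * p) - 4 • p + 1 := by noncomm_ring
  rw [this, hp.eq, sub_self, zero_add]

theorem IsSelfAdjoint.two_nsmul_sub_one {R : Type*} [Ring R] [StarRing R] {p : R}
    (hp : IsSelfAdjoint p) : IsSelfAdjoint (2 • p - 1) := by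
  rw [two_nsmul]
  exact (hp.add hp).sub (.one R)

theorem IsSelfAdjoint.norm_le_one_of_mul_self_eq_one {A : Type*} [NormedRing A] [StarRing A]
    [CStarRing A] {a : A} (ha : IsSelfAdjoint a) (h : a * a = 1) : ‖a‖ ≤ 1 := by
  nontriviality A
  refine (CStarRing.norm_of_mem_unitary ?_).le
  rw [Unitary.mem_iff, ha.star_eq]
  exact ⟨h, h⟩

section CStarAlgebra

variable {A : Type*} [CStarAlgebra A] {δ : ℝ}

theorem IsSelfAdjoint.spectrum_subset_of_isUnit_algebraMap_sub {b : A} (hb : IsSelfAdjoint b)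
    (hb1 : ‖b‖ ≤ 1) (hgap : ∀ r : ℝ, |r| < δ → IsUnit (algebraMap ℂ A r - b)) :
    spectrum ℂ b ⊆ Complex.ofReal '' (Set.Icc (-1) (-δ) ∪ Set.Icc δ 1) := by
  nontriviality A using spectrum.of_subsingleton
  intro z hz
  have hre : z = z.re := hb.mem_spectrum_eq_re hz
  have hle : |z.re| ≤ 1 := by
    rw [← Real.norm_eq_abs, ← Complex.norm_real, ← hre]
    exact (spectrum.norm_le_norm_of_mem hz).trans hb1
  have hge : δ ≤ |z.re| := by
    by_contra! hlt
    exact spectrum.mem_iff.mp (hre ▸ hz) (hgap z.re hlt)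
  refine ⟨z.re, ?_, hre.symm⟩
  rcases le_abs'.mp hge with h | h
  · exact .inl ⟨by linarith [neg_abs_le z.re], h⟩
  · exact .inr ⟨h, by linarith [le_abs_self z.re]⟩

theorem spectrum_smul_add_smul_subset_of_mul_self_eq_one {a₀ a₁ : A} (h₀ : IsSelfAdjoint a₀)
    (h₀₀ : a₀ * a₀ = 1) (h₁ : IsSelfAdjoint a₁) (h₁₁ : a₁ * a₁ = 1)
    (hd : ‖a₁ - a₀‖ ≤ 2 * (1 - δ)) {t : ℝ} (ht : t ∈ Set.Icc (0 : ℝ) 1) :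
    spectrum ℂ ((1 - t) • a₀ + t • a₁) ⊆
      Complex.ofReal '' (Set.Icc (-1) (-δ) ∪ Set.Icc δ 1) := by
  have hsa : IsSelfAdjoint ((1 - t) • a₀ + t • a₁) :=
    ((IsSelfAdjoint.all _).smul h₀).add ((IsSelfAdjoint.all _).smul h₁)
  have hball : (1 - t) • a₀ + t • a₁ ∈ Metric.closedBall 0 1 :=
    convex_closedBall 0 1
      (mem_closedBall_zero_iff.mpr (h₀.norm_le_one_of_mul_self_eq_one h₀₀))
      (mem_closedBall_zero_iff.mpr (h₁.norm_le_one_of_mul_self_eq_one h₁₁))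
      (by linarith [ht.2]) ht.1 (by ring)
  refine hsa.spectrum_subset_of_isUnit_algebraMap_sub (mem_closedBall_zero_iff.mp hball) ?_
  intro r hr
  nontriviality A
  obtain ⟨z, hz, hclose⟩ := exists_endpoint_norm_sub_le_half a₀ a₁ ht
  have hz' : IsSelfAdjoint z ∧ z * z = 1 := by
    rcases hz with rfl | rfl
    exacts [⟨h₀, h₀₀⟩, ⟨h₁, h₁₁⟩]
  rw [← add_sub_cancel z ((1 - t) • a₀ + t • a₁)]
  refine isUnit_algebraMap_sub_add_of_mul_self_eq_one hz'.2
    (hz'.1.norm_le_one_of_mul_self_eq_one hz'.2) ?_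
  rw [Complex.norm_real, Real.norm_eq_abs]
  linarith

end CStarAlgebra

/-- Let `P, Q` be orthogonal projections on a complex Hilbert space with
`‖Q - P‖ ≤ 1 - δ` for some `δ ∈ (0, 1]`, and let `B t = (1 - t)(2Q - 1) + t(2P - 1)`.
Then for every `t ∈ [0,1]` the spectrum of `B t` is contained in
`[-1, -δ] ∪ [δ, 1]`; in particular each `B t` is invertible. -/
theorem spectrum_path_gap {H : Type*} [NormedAddCommGroup H]
    [InnerProductSpace ℂ H] [CompleteSpace H] (P Q : H →L[ℂ] H)
    (hP : IsIdempotentElem P) (hPs : IsSelfAdjoint P)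
    (hQ : IsIdempotentElem Q) (hQs : IsSelfAdjoint Q)
    (δ : ℝ) (hδ : δ ∈ Set.Ioc (0 : ℝ) 1) (hQP : ‖Q - P‖ ≤ 1 - δ)
    (B₀ B₁ : H →L[ℂ] H) (hB₀ : B₀ = 2 • Q - 1) (hB₁ : B₁ = 2 • P - 1)
    (B : ℝ → (H →L[ℂ] H)) (hB : ∀ t : ℝ, B t = (1 - t) • B₀ + t • B₁) :
    ∀ t ∈ Set.Icc (0 : ℝ) 1,
      spectrum ℂ (B t) ⊆ Complex.ofReal '' (Set.Icc (-1) (-δ) ∪ Set.Icc δ 1) ∧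
        IsUnit (B t) := by
  subst hB₀ hB₁
  have hd : ‖(2 • P - 1) - (2 • Q - 1)‖ ≤ 2 * (1 - δ) :=
    calc ‖(2 • P - 1) - (2 • Q - 1)‖ = ‖2 • (P - Q)‖ := by abel_nf
      _ ≤ 2 * ‖Q - P‖ := by simpa [norm_sub_rev] using norm_nsmul_le (n := 2) (a := P - Q)
      _ ≤ 2 * (1 - δ) := by linarith
  intro t ht
  have hspec := hB t ▸ spectrum_smul_add_smul_subset_of_mul_self_eq_one
    hQs.two_nsmul_sub_one hQ.two_nsmul_sub_one_mul_self
    hPs.two_nsmul_sub_one hP.two_nsmul_sub_one_mul_self hd ht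
  refine ⟨hspec, spectrum.isUnit_of_zero_notMem ℂ fun h0 => ?_⟩
  obtain ⟨r, hr, hr0⟩ := hspec h0
  rw [Complex.ofReal_eq_zero] at hr0
  subst hr0
  rcases hr with h | h <;> linarith [h.1, h.2, hδ.1]
end
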